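/- Let ξ : ℝ² → (0,∞) be a smooth positive function on the 2-torus. Then the pointwise identity 2ξ ∇(Δ√ξ / √ξ) = div(ξ ∇²(ln ξ)) holds, where ∇²(ln ξ) denotes the Hessian matrix of ln ξ and div acts row-wise on the matrix field ξ ∇²(ln ξ). -/

import Mathlib

noncomputable def pd (i : Fin 2) (f : (Fin 2 → ℝ) → ℝ) : (Fin 2 → ℝ) → ℝ :=
  fun x => fderiv ℝ f x (Pi.single i 1)

lemma contDiff_pd {f : (Fin 2 → ℝ) → ℝ} (hf : ContDiff ℝ (⊤ : ℕ∞) f) (i : Fin 2) :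
    ContDiff ℝ (⊤ : ℕ∞) (pd i f) :=
  (hf.fderiv_right (by simp)).clm_apply contDiff_const

lemma pd_add {f g : (Fin 2 → ℝ) → ℝ} {x : Fin 2 → ℝ} (hf : DifferentiableAt ℝ f x)
    (hg : DifferentiableAt ℝ g x) (i : Fin 2) :
    pd i (fun y => f y + g y) x = pd i f x + pd i g x := by
  simp [pd, fderiv_fun_add hf hg]

lemma pd_sub {f g : (Fin 2 → ℝ) → ℝ} {x : Fin 2 → ℝ} (hf : DifferentiableAt ℝ f x)
    (hg : DifferentiableAt ℝ g x) (i : Fin 2) :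
    pd i (fun y => f y - g y) x = pd i f x - pd i g x := by
  simp [pd, fderiv_fun_sub hf hg]

lemma pd_mul {f g : (Fin 2 → ℝ) → ℝ} {x : Fin 2 → ℝ} (hf : DifferentiableAt ℝ f x)
    (hg : DifferentiableAt ℝ g x) (i : Fin 2) :
    pd i (fun y => f y * g y) x = pd i f x * g x + f x * pd i g x := by
  simp [pd, fderiv_fun_mul hf hg]; ring

lemma pd_inv {g : (Fin 2 → ℝ) → ℝ} {x : Fin 2 → ℝ}
    (hg : DifferentiableAt ℝ g x) (h0 : g x ≠ 0) (i : Fin 2) :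
    pd i (fun y => (g y)⁻¹) x = -pd i g x / (g x) ^ 2 := by
  have h : HasFDerivAt (fun y => (g y)⁻¹) (-((g x) ^ 2)⁻¹ • fderiv ℝ g x) x :=
    (hasDerivAt_inv h0).comp_hasFDerivAt x hg.hasFDerivAt
  simp only [pd, h.fderiv]
  simp [div_eq_mul_inv]; ring

lemma pd_div {f g : (Fin 2 → ℝ) → ℝ} {x : Fin 2 → ℝ} (hf : DifferentiableAt ℝ f x)
    (hg : DifferentiableAt ℝ g x) (h0 : g x ≠ 0) (i : Fin 2) :
    pd i (fun y => f y / g y) x = (pd i f x * g x - f x * pd i g x) / (g x) ^ 2 := by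
  have hgi : DifferentiableAt ℝ (fun y => (g y)⁻¹) x :=
    ((hasDerivAt_inv h0).comp_hasFDerivAt x hg.hasFDerivAt).differentiableAt
  have : pd i (fun y => f y / g y) x = pd i (fun y => f y * (g y)⁻¹) x := by
    simp [div_eq_mul_inv]
  rw [this, pd_mul hf hgi, pd_inv hg h0]
  field_simp
  ring

lemma pd_sqrt {f : (Fin 2 → ℝ) → ℝ} {x : Fin 2 → ℝ} (hf : DifferentiableAt ℝ f x)
    (h0 : 0 < f x) (i : Fin 2) :
    pd i (fun y => Real.sqrt (f y)) x = pd i f x / (2 * Real.sqrt (f x)) := by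
  have h : HasFDerivAt (fun y => Real.sqrt (f y)) ((1 / (2 * Real.sqrt (f x))) • fderiv ℝ f x) x :=
    (Real.hasDerivAt_sqrt h0.ne').comp_hasFDerivAt x hf.hasFDerivAt
  simp only [pd, h.fderiv]
  simp [div_eq_mul_inv, pd]; ring

lemma pd_log {f : (Fin 2 → ℝ) → ℝ} {x : Fin 2 → ℝ} (hf : DifferentiableAt ℝ f x)
    (h0 : f x ≠ 0) (i : Fin 2) :
    pd i (fun y => Real.log (f y)) x = pd i f x / f x := by
  have h : HasFDerivAt (fun y => Real.log (f y)) ((f x)⁻¹ • fderiv ℝ f x) x :=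
    (Real.hasDerivAt_log h0).comp_hasFDerivAt x hf.hasFDerivAt
  simp only [pd, h.fderiv]
  simp [div_eq_mul_inv, pd]; ring

lemma pd_comm {f : (Fin 2 → ℝ) → ℝ} (hf : ContDiff ℝ (⊤ : ℕ∞) f) (i j : Fin 2) (x : Fin 2 → ℝ) :
    pd i (pd j f) x = pd j (pd i f) x := by
  have hd : ∀ y, HasFDerivAt f (fderiv ℝ f y) y := fun y =>
    (hf.differentiable (by simp) y).hasFDerivAt
  have h2 : HasFDerivAt (fderiv ℝ f) (fderiv ℝ (fderiv ℝ f) x) x :=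
    ((hf.fderiv_right (m := 1) (WithTop.coe_le_coe.mpr le_top)).differentiable (by simp) x).hasFDerivAt
  have hsymm := second_derivative_symmetric hd h2
  have key : ∀ k l : Fin 2, pd k (pd l f) x
      = fderiv ℝ (fderiv ℝ f) x (Pi.single k 1) (Pi.single l 1) := by
    intro k l
    have hA : HasFDerivAt (fun y => (ContinuousLinearMap.apply ℝ ℝ (Pi.single l 1 : Fin 2 → ℝ))
        (fderiv ℝ f y))
        ((ContinuousLinearMap.apply ℝ ℝ (Pi.single l 1 : Fin 2 → ℝ)).comp
          (fderiv ℝ (fderiv ℝ f) x)) x :=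
      (ContinuousLinearMap.apply ℝ ℝ (Pi.single l 1 : Fin 2 → ℝ)).hasFDerivAt.comp x h2
    have : pd l f = fun y => (ContinuousLinearMap.apply ℝ ℝ (Pi.single l 1 : Fin 2 → ℝ))
        (fderiv ℝ f y) := rfl
    rw [pd, this, hA.fderiv]
    rfl
  rw [key i j, key j i, hsymm]

lemma pd_const_mul {f : (Fin 2 → ℝ) → ℝ} {x : Fin 2 → ℝ} (hf : DifferentiableAt ℝ f x)
    (c : ℝ) (i : Fin 2) :
    pd i (fun y => c * f y) x = c * pd i f x := by
  simp [pd, fderiv_const_mul hf c]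

lemma diff_div {f g : (Fin 2 → ℝ) → ℝ} {x : Fin 2 → ℝ} (hf : DifferentiableAt ℝ f x)
    (hg : DifferentiableAt ℝ g x) (h0 : g x ≠ 0) :
    DifferentiableAt ℝ (fun y => f y / g y) x := by
  have hgi : DifferentiableAt ℝ (fun y => (g y)⁻¹) x :=
    ((hasDerivAt_inv h0).comp_hasFDerivAt x hg.hasFDerivAt).differentiableAt
  simpa only [div_eq_mul_inv] using hf.fun_mul hgi

open MeasureTheory

/-- The Bohm potential identity: for smooth positive `ξ`,
`2ξ ∇(Δ√ξ/√ξ) = div(ξ ∇² ln ξ)` pointwise (componentwise in `j`). -/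
theorem stmt6 (ξ : (Fin 2 → ℝ) → ℝ) (hξ : ContDiff ℝ (⊤ : ℕ∞) ξ) (hpos : ∀ x, 0 < ξ x) :
    ∀ (x : Fin 2 → ℝ) (j : Fin 2),
      2 * ξ x * pd j (fun y =>
          (∑ i, pd i (pd i (fun z => Real.sqrt (ξ z))) y) / Real.sqrt (ξ y)) x
        = ∑ i, pd i (fun y => ξ y * pd i (pd j (fun z => Real.log (ξ z))) y) x := by
  intro x j
  have hne : ∀ y, ξ y ≠ 0 := fun y => (hpos y).ne'
  have hD : ∀ {f : (Fin 2 → ℝ) → ℝ}, ContDiff ℝ (⊤ : ℕ∞) f → ∀ y, DifferentiableAt ℝ f y :=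
    fun h y => h.differentiable (by simp) y
  have hdξ : ∀ y, DifferentiableAt ℝ ξ y := hD hξ
  have hC1 : ∀ i, ContDiff ℝ (⊤ : ℕ∞) (pd i ξ) := contDiff_pd hξ
  have hC2 : ∀ i k, ContDiff ℝ (⊤ : ℕ∞) (pd i (pd k ξ)) := fun i k => contDiff_pd (hC1 k) i
  -- sqrt side preliminaries
  have hs : ContDiff ℝ (⊤ : ℕ∞) (fun z => Real.sqrt (ξ z)) := hξ.sqrt hne
  have hps : ∀ i, pd i (fun z => Real.sqrt (ξ z))
      = fun y => pd i ξ y / (2 * Real.sqrt (ξ y)) :=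
    fun i => funext fun y => pd_sqrt (hdξ y) (hpos y) i
  have hsne : ∀ y, Real.sqrt (ξ y) ≠ 0 := fun y => (Real.sqrt_pos.mpr (hpos y)).ne'
  have hden : ∀ y, DifferentiableAt ℝ (fun y => 2 * Real.sqrt (ξ y)) y :=
    fun y => (hD hs y).const_mul 2
  have hden0 : ∀ y, (2 : ℝ) * Real.sqrt (ξ y) ≠ 0 := fun y =>
    mul_ne_zero two_ne_zero (hsne y)
  have hpps : ∀ (i : Fin 2) (y : Fin 2 → ℝ),
      pd i (pd i (fun z => Real.sqrt (ξ z))) y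
        = (pd i (pd i ξ) y * (2 * Real.sqrt (ξ y))
            - pd i ξ y * (2 * (pd i ξ y / (2 * Real.sqrt (ξ y))))) / (2 * Real.sqrt (ξ y)) ^ 2 := by
    intro i y
    rw [hps i, pd_div (hD (hC1 i) y) (hden y) (hden0 y) i]
    rw [pd_const_mul (hD hs y) 2 i, pd_sqrt (hdξ y) (hpos y) i]
  -- rewrite the LHS inner function
  have hLfun : (fun y => (pd 0 (pd 0 (fun z => Real.sqrt (ξ z))) y
        + pd 1 (pd 1 (fun z => Real.sqrt (ξ z))) y) / Real.sqrt (ξ y))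
      = fun y => (pd 0 (pd 0 ξ) y + pd 1 (pd 1 ξ) y) / (2 * ξ y)
          - (pd 0 ξ y * pd 0 ξ y + pd 1 ξ y * pd 1 ξ y) / (4 * (ξ y * ξ y)) := by
    funext y
    rw [hpps 0 y, hpps 1 y]
    set s := Real.sqrt (ξ y) with hsdef
    have hsq : s * s = ξ y := Real.mul_self_sqrt (hpos y).le
    have hs0 : s ≠ 0 := hsne y
    rw [← hsq]
    field_simp
    ring
  -- log side preliminaries
  have hlog1 : pd j (fun z => Real.log (ξ z)) = fun y => pd j ξ y / ξ y :=
    funext fun y => pd_log (hdξ y) (hne y) j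
  have hdq : ∀ i y, DifferentiableAt ℝ (fun y => pd i ξ y / ξ y) y := fun i y =>
    diff_div (hD (hC1 i) y) (hdξ y) (hne y)
  have hRi : ∀ i' : Fin 2, (fun y => ξ y * pd i' (pd j (fun z => Real.log (ξ z))) y)
      = fun y => pd i' (pd j ξ) y - pd i' ξ y * pd j ξ y / ξ y := by
    intro i'
    funext y
    rw [hlog1, pd_div (hD (hC1 j) y) (hdξ y) (hne y) i']
    have h0 := hne y
    field_simp
  simp only [Fin.sum_univ_two]
  rw [hLfun, hRi 0, hRi 1]
  -- compute the RHS terms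
  have hprod : ∀ i : Fin 2, DifferentiableAt ℝ (fun y => pd i ξ y * pd j ξ y / ξ y) x :=
    fun i => diff_div ((hD (hC1 i) x).mul (hD (hC1 j) x)) (hdξ x) (hne x)
  have hR : ∀ i : Fin 2,
      pd i (fun y => pd i (pd j ξ) y - pd i ξ y * pd j ξ y / ξ y) x
        = pd i (pd i (pd j ξ)) x
          - ((pd i (pd i ξ) x * pd j ξ x + pd i ξ x * pd i (pd j ξ) x) * ξ x
              - pd i ξ x * pd j ξ x * pd i ξ x) / (ξ x) ^ 2 := by
    intro i
    rw [pd_sub (hD (hC2 i j) x) (hprod i) i,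
      pd_div (f := fun y => pd i ξ y * pd j ξ y) ((hD (hC1 i) x).mul (hD (hC1 j) x))
        (hdξ x) (hne x) i,
      pd_mul (hD (hC1 i) x) (hD (hC1 j) x) i]
  rw [hR 0, hR 1]
  -- compute the LHS derivative
  have hA : DifferentiableAt ℝ (fun y => pd 0 (pd 0 ξ) y + pd 1 (pd 1 ξ) y) x :=
    (hD (hC2 0 0) x).add (hD (hC2 1 1) x)
  have hB : DifferentiableAt ℝ (fun y => pd 0 ξ y * pd 0 ξ y + pd 1 ξ y * pd 1 ξ y) x :=
    ((hD (hC1 0) x).mul (hD (hC1 0) x)).add ((hD (hC1 1) x).mul (hD (hC1 1) x))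
  have hdenA : DifferentiableAt ℝ (fun y => 2 * ξ y) x := (hdξ x).const_mul 2
  have hdenB : DifferentiableAt ℝ (fun y => 4 * (ξ y * ξ y)) x :=
    ((hdξ x).mul (hdξ x)).const_mul 4
  have hdA0 : (2 : ℝ) * ξ x ≠ 0 := mul_ne_zero two_ne_zero (hne x)
  have hdB0 : (4 : ℝ) * (ξ x * ξ x) ≠ 0 := mul_ne_zero four_ne_zero (mul_ne_zero (hne x) (hne x))
  rw [pd_sub (diff_div hA hdenA hdA0) (diff_div hB hdenB hdB0) j,
    pd_div (f := fun y => pd 0 (pd 0 ξ) y + pd 1 (pd 1 ξ) y) hA hdenA hdA0 j,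
    pd_div (f := fun y => pd 0 ξ y * pd 0 ξ y + pd 1 ξ y * pd 1 ξ y) hB hdenB hdB0 j,
    pd_add (hD (hC2 0 0) x) (hD (hC2 1 1) x) j,
    pd_add ((hD (hC1 0) x).fun_mul (hD (hC1 0) x)) ((hD (hC1 1) x).fun_mul (hD (hC1 1) x)) j,
    pd_mul (hD (hC1 0) x) (hD (hC1 0) x) j,
    pd_mul (hD (hC1 1) x) (hD (hC1 1) x) j,
    pd_const_mul (hdξ x) 2 j,
    pd_const_mul ((hdξ x).fun_mul (hdξ x)) 4 j,
    pd_mul (hdξ x) (hdξ x) j]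
  -- third-derivative symmetry
  have hswap : ∀ i k : Fin 2, pd i (pd k ξ) = pd k (pd i ξ) :=
    fun i k => funext fun y => pd_comm hξ i k y
  have h3 : ∀ i : Fin 2, pd j (pd i (pd i ξ)) x = pd i (pd i (pd j ξ)) x := by
    intro i
    rw [pd_comm (hC1 i) j i x, hswap j i]
  have h2s : ∀ i : Fin 2, pd j (pd i ξ) x = pd i (pd j ξ) x := fun i => pd_comm hξ j i x
  rw [h3 0, h3 1, h2s 0, h2s 1]
  have hax : ξ x ≠ 0 := hne x
  field_simp
  ring
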